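/- If P is a row-stochastic matrix on a finite set Z that is irreducible, then the traffic equations α = αP have a strictly positive solution, unique up to a positive scalar multiple. -/
import Mathlib

lemma pf_pow_nonneg {Z : Type*} [Fintype Z] [DecidableEq Z]
    (P : Matrix Z Z ℝ) (hPnn : ∀ z z', 0 ≤ P z z') :
    ∀ n (z z' : Z), 0 ≤ (P ^ n) z z' := by
  intro n
  induction n with
  | zero => intro z z'; simp [Matrix.one_apply]; positivity
  | succ n ih =>
    intro z z'
    rw [pow_succ, Matrix.mul_apply]
    exact Finset.sum_nonneg fun i _ => mul_nonneg (ih z i) (hPnn i z')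

lemma pf_vecMul_apply {Z : Type*} [Fintype Z] (P : Matrix Z Z ℝ) (v : Z → ℝ) (z' : Z) :
    Matrix.vecMul v P z' = ∑ z, v z * P z z' := by
  simp [Matrix.vecMul, dotProduct]

lemma pf_abs_fixed {Z : Type*} [Fintype Z] [DecidableEq Z]
    (P : Matrix Z Z ℝ) (hPnn : ∀ z z', 0 ≤ P z z') (hProw : ∀ z, ∑ z', P z z' = 1)
    (v : Z → ℝ) (hv : Matrix.vecMul v P = v) :
    Matrix.vecMul (fun z => |v z|) P = fun z => |v z| := by
  have key : ∀ z', |v z'| ≤ Matrix.vecMul (fun z => |v z|) P z' := by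
    intro z'
    have h0 : v z' = ∑ z, v z * P z z' := by
      conv_lhs => rw [← hv]
      exact pf_vecMul_apply P v z'
    calc |v z'| = |∑ z, v z * P z z'| := by rw [← h0]
      _ ≤ ∑ z, |v z * P z z'| := Finset.abs_sum_le_sum_abs _ _
      _ = ∑ z, |v z| * P z z' := by
          refine Finset.sum_congr rfl fun z _ => ?_
          rw [abs_mul, abs_of_nonneg (hPnn z z')]
      _ = Matrix.vecMul (fun z => |v z|) P z' := (pf_vecMul_apply P _ z').symm
  have hsum : ∑ z', Matrix.vecMul (fun z => |v z|) P z' = ∑ z', |v z'| := by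
    simp only [pf_vecMul_apply]
    rw [Finset.sum_comm]
    refine Finset.sum_congr rfl fun z _ => ?_
    rw [← Finset.mul_sum, hProw, mul_one]
  funext z'
  exact ((Finset.sum_eq_sum_iff_of_le (fun i _ => key i)).mp hsum.symm z'
    (Finset.mem_univ z')).symm

lemma pf_fixed_pow {Z : Type*} [Fintype Z] [DecidableEq Z]
    (P : Matrix Z Z ℝ) (v : Z → ℝ) (hv : Matrix.vecMul v P = v) (n : ℕ) :
    Matrix.vecMul v (P ^ n) = v := by
  induction n with
  | zero => simp
  | succ n ih => rw [pow_succ, ← Matrix.vecMul_vecMul, ih, hv]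

lemma pf_pos {Z : Type*} [Fintype Z] [DecidableEq Z]
    (P : Matrix Z Z ℝ) (hPnn : ∀ z z', 0 ≤ P z z')
    (hirr : ∀ z z', ∃ n : ℕ, 0 < (P ^ n) z z')
    (v : Z → ℝ) (hnn : ∀ z, 0 ≤ v z) (hne : v ≠ 0)
    (hv : Matrix.vecMul v P = v) : ∀ z, 0 < v z := by
  obtain ⟨z₀, hz₀⟩ : ∃ z, 0 < v z := by
    by_contra h
    push_neg at h
    exact hne (funext fun z => le_antisymm (h z) (hnn z))
  intro z'
  obtain ⟨n, hn⟩ := hirr z₀ z'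
  have h1 : v z' = ∑ z, v z * (P ^ n) z z' := by
    conv_lhs => rw [← pf_fixed_pow P v hv n]
    exact pf_vecMul_apply _ v z'
  have h2 : v z₀ * (P ^ n) z₀ z' ≤ ∑ z, v z * (P ^ n) z z' :=
    Finset.single_le_sum (fun z _ => mul_nonneg (hnn z) (pf_pow_nonneg P hPnn n z z'))
      (Finset.mem_univ z₀)
  have h3 := mul_pos hz₀ hn
  rw [h1]
  linarith

/-- Perron–Frobenius: an irreducible row-stochastic matrix on a finite set has a
strictly positive solution of the traffic equations `α = αP`, unique up to a
positive scalar multiple. -/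
theorem stmt_9 {Z : Type*} [Fintype Z] [DecidableEq Z] [Nonempty Z]
    (P : Matrix Z Z ℝ) (hPnn : ∀ z z', 0 ≤ P z z')
    (hProw : ∀ z, ∑ z', P z z' = 1)
    (hirr : ∀ z z', ∃ n : ℕ, 0 < (P ^ n) z z') :
    ∃ α : Z → ℝ, (∀ z, 0 < α z) ∧ Matrix.vecMul α P = α ∧
      ∀ β : Z → ℝ, (∀ z, 0 ≤ β z) → β ≠ 0 → Matrix.vecMul β P = β →
        ∃ c : ℝ, 0 < c ∧ β = c • α := by
  have hdet : (P - 1).det = 0 := by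
    rw [← Matrix.exists_mulVec_eq_zero_iff]
    refine ⟨fun _ => 1, ?_, ?_⟩
    · intro h
      have := congrFun h (Classical.arbitrary Z)
      simp at this
    · funext z
      simp [Matrix.mulVec, dotProduct, Matrix.sub_apply, Matrix.one_apply,
        sub_mul, Finset.sum_sub_distrib, hProw z]
  obtain ⟨v, hvne, hv⟩ := (Matrix.exists_vecMul_eq_zero_iff).mpr hdet
  have hvfix : Matrix.vecMul v P = v := by
    rw [Matrix.vecMul_sub] at hv
    simpa [sub_eq_zero] using hv
  set α : Z → ℝ := fun z => |v z| with hα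
  have hαfix : Matrix.vecMul α P = α := pf_abs_fixed P hPnn hProw v hvfix
  have hαnn : ∀ z, 0 ≤ α z := fun z => abs_nonneg _
  have hαne : α ≠ 0 := by
    intro h
    apply hvne
    funext z
    have := congrFun h z
    simpa [hα, abs_eq_zero] using this
  have hαpos : ∀ z, 0 < α z := pf_pos P hPnn hirr α hαnn hαne hαfix
  refine ⟨α, hαpos, hαfix, ?_⟩
  intro β hβnn hβne hβfix
  have hβpos : ∀ z, 0 < β z := pf_pos P hPnn hirr β hβnn hβne hβfix
  obtain ⟨z₀⟩ := ‹Nonempty Z›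
  set c : ℝ := β z₀ / α z₀ with hc
  have hcpos : 0 < c := div_pos (hβpos z₀) (hαpos z₀)
  refine ⟨c, hcpos, ?_⟩
  set γ : Z → ℝ := β - c • α with hγ
  have hγfix : Matrix.vecMul γ P = γ := by
    have hsmul : Matrix.vecMul (c • α) P = c • α := by
      funext z'
      simp only [pf_vecMul_apply, Pi.smul_apply, smul_eq_mul]
      simp only [mul_assoc]
      rw [← Finset.mul_sum]
      congr 1
      exact (pf_vecMul_apply P α z') ▸ congrFun hαfix z'
    rw [hγ, Matrix.sub_vecMul, hβfix, hsmul]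
  have hγabs : Matrix.vecMul (fun z => |γ z|) P = fun z => |γ z| :=
    pf_abs_fixed P hPnn hProw γ hγfix
  have hγz₀ : γ z₀ = 0 := by
    have : c * α z₀ = β z₀ := div_mul_cancel₀ _ (hαpos z₀).ne'
    simp [hγ, this]
  have hγzero : γ = 0 := by
    by_contra h
    have habsne : (fun z => |γ z|) ≠ 0 := by
      intro hh
      apply h
      funext z
      have := congrFun hh z
      simpa [abs_eq_zero] using this
    have hpos := pf_pos P hPnn hirr (fun z => |γ z|) (fun z => abs_nonneg _) habsne hγabs z₀
    rw [hγz₀] at hpos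
    simp at hpos
  exact sub_eq_zero.mp hγzero
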